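/- arXiv:2410.03178 — 2 statements merged into one kernel-verified Lean document; each statement's English description precedes it below -/
import Mathlib

section
/- Let A be an n×n real matrix, B an n×m real matrix, Q an n×n positive semidefinite matrix, and R an m×m positive definite matrix. If the block matrix [Q; A] (stacked vertically) has full column rank n and [A B] (stacked horizontally) has full row rank n, then for any vector c ∈ ℝⁿ the optimization problem min_{y,u} (1/2)(yᵀQy + uᵀRu) subject to Ay + Bu + c = 0 has at most one optimal solution: if (x̄,ū) and (x̂,û) are both minimizers, then x̄ = x̂ and ū = û. -/
/-!
Two minimizers have the same cost, and their midpoint, feasible because the constraint is affine,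
costs at least as much. The parallelogram law `q (a + b) + q (a - b) = 2 q a + 2 q b` for the
quadratic forms of `Q` and `R` turns this into `dᵀ Q d + eᵀ R e ≤ 0` for `d = x̄ - x̂` and
`e = ū - û`. Definiteness of `R` gives `e = 0` and semidefiniteness of `Q` gives `Q d = 0`;
subtracting the constraints then gives `A d = 0`, so `d = 0` because `[Q; A]` has full column
rank.
-/

open Matrix

theorem Matrix.mulVec_injective_of_rank_eq_card {K ι κ : Type*} [Field K] [Fintype ι]
    [Fintype κ] {M : Matrix κ ι K} (hM : M.rank = Fintype.card ι) :
    Function.Injective M.mulVec := by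
  have h := LinearMap.finrank_range_add_finrank_ker M.mulVecLin
  rw [Module.finrank_fintype_fun_eq_card, ← Matrix.rank, hM, add_eq_left,
    Submodule.finrank_eq_zero, LinearMap.ker_eq_bot] at h
  exact h

theorem Matrix.add_dotProduct_mulVec_add_add_sub_dotProduct_mulVec_sub {R ι : Type*}
    [CommRing R] [Fintype ι] (M : Matrix ι ι R) (a b : ι → R) :
    (a + b) ⬝ᵥ M *ᵥ (a + b) + (a - b) ⬝ᵥ M *ᵥ (a - b) =
      2 * (a ⬝ᵥ M *ᵥ a) + 2 * (b ⬝ᵥ M *ᵥ b) := by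
  simp only [mulVec_add, mulVec_sub, dotProduct_add, dotProduct_sub, add_dotProduct,
    sub_dotProduct]
  ring

theorem Matrix.PosSemidef.mulVec_eq_zero_and_eq_zero_of_add_nonpos {ι κ : Type*} [Fintype ι]
    [Fintype κ] {Q : Matrix ι ι ℝ} {R : Matrix κ κ ℝ} (hQ : Q.PosSemidef) (hR : R.PosDef)
    {d : ι → ℝ} {e : κ → ℝ} (h : d ⬝ᵥ Q *ᵥ d + e ⬝ᵥ R *ᵥ e ≤ 0) :
    Q *ᵥ d = 0 ∧ e = 0 := by
  have hQd : 0 ≤ d ⬝ᵥ Q *ᵥ d := hQ.dotProduct_mulVec_nonneg d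
  have he : e = 0 := by
    by_contra he
    have := hR.dotProduct_mulVec_pos he
    rw [star_trivial] at this
    linarith
  subst he
  refine ⟨(hQ.dotProduct_mulVec_zero_iff d).mp ?_, rfl⟩
  rw [star_trivial]
  simp only [mulVec_zero, dotProduct_zero, add_zero] at h
  linarith

theorem stmt_0_general {n m : ℕ}
    (A : Matrix (Fin n) (Fin n) ℝ) (B : Matrix (Fin n) (Fin m) ℝ)
    (Q : Matrix (Fin n) (Fin n) ℝ) (R : Matrix (Fin m) (Fin m) ℝ)
    (hQ : Q.PosSemidef) (hR : R.PosDef)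
    (hrankQA : (Matrix.fromRows Q A).rank = n)
    (c : Fin n → ℝ)
    (f : (Fin n → ℝ) → (Fin m → ℝ) → ℝ)
    (hf : ∀ y u, f y u = (1/2) * (y ⬝ᵥ Q.mulVec y + u ⬝ᵥ R.mulVec u))
    (xbar xhat : Fin n → ℝ) (ubar uhat : Fin m → ℝ)
    (hfeas1 : A.mulVec xbar + B.mulVec ubar + c = 0)
    (hfeas2 : A.mulVec xhat + B.mulVec uhat + c = 0)
    (hopt1 : ∀ y u, A.mulVec y + B.mulVec u + c = 0 → f xbar ubar ≤ f y u)
    (hopt2 : ∀ y u, A.mulVec y + B.mulVec u + c = 0 → f xhat uhat ≤ f y u) :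
    xbar = xhat ∧ ubar = uhat := by
  have hmid :
      A *ᵥ ((1/2 : ℝ) • (xbar + xhat)) + B *ᵥ ((1/2 : ℝ) • (ubar + uhat)) + c = 0 := by
    simp only [mulVec_smul, mulVec_add]
    linear_combination (norm := module) (1/2 : ℝ) • (hfeas1 + hfeas2)
  have hdiff :
      (xbar - xhat) ⬝ᵥ Q *ᵥ (xbar - xhat) +
        (ubar - uhat) ⬝ᵥ R *ᵥ (ubar - uhat) ≤ 0 := by
    have h1 := hopt1 _ _ hfeas2
    have h2 := hopt2 _ _ hfeas1
    have h3 := hopt1 _ _ hmid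
    have hQ2 := Q.add_dotProduct_mulVec_add_add_sub_dotProduct_mulVec_sub xbar xhat
    have hR2 := R.add_dotProduct_mulVec_add_add_sub_dotProduct_mulVec_sub ubar uhat
    simp only [hf, mulVec_smul, dotProduct_smul, smul_dotProduct, smul_eq_mul] at h1 h2 h3
    linarith
  obtain ⟨hQd, he⟩ := hQ.mulVec_eq_zero_and_eq_zero_of_add_nonpos hR hdiff
  obtain rfl : ubar = uhat := sub_eq_zero.mp he
  have hAx : A *ᵥ xbar = A *ᵥ xhat :=
    add_right_cancel (add_right_cancel (hfeas1.trans hfeas2.symm))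
  have hQx : Q *ᵥ xbar = Q *ᵥ xhat := sub_eq_zero.mp (by rwa [← mulVec_sub])
  refine ⟨mulVec_injective_of_rank_eq_card (by simpa using hrankQA) ?_, rfl⟩
  rw [fromRows_mulVec, fromRows_mulVec, hQx, hAx]

/-- Uniqueness of the optimal solution of the steady-state optimization problem
`min (1/2)(yᵀQy + uᵀRu)` s.t. `Ay + Bu + c = 0`. -/
theorem stmt_0 {n m : ℕ}
    (A : Matrix (Fin n) (Fin n) ℝ) (B : Matrix (Fin n) (Fin m) ℝ)
    (Q : Matrix (Fin n) (Fin n) ℝ) (R : Matrix (Fin m) (Fin m) ℝ)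
    (hQ : Q.PosSemidef) (hR : R.PosDef)
    (hrankQA : (Matrix.fromRows Q A).rank = n)
    (hrankAB : (Matrix.fromCols A B).rank = n)
    (c : Fin n → ℝ)
    (f : (Fin n → ℝ) → (Fin m → ℝ) → ℝ)
    (hf : ∀ y u, f y u = (1/2) * (y ⬝ᵥ Q.mulVec y + u ⬝ᵥ R.mulVec u))
    (xbar xhat : Fin n → ℝ) (ubar uhat : Fin m → ℝ)
    (hfeas1 : A.mulVec xbar + B.mulVec ubar + c = 0)
    (hfeas2 : A.mulVec xhat + B.mulVec uhat + c = 0)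
    (hopt1 : ∀ y u, A.mulVec y + B.mulVec u + c = 0 → f xbar ubar ≤ f y u)
    (hopt2 : ∀ y u, A.mulVec y + B.mulVec u + c = 0 → f xhat uhat ≤ f y u) :
    xbar = xhat ∧ ubar = uhat :=
  stmt_0_general A B Q R hQ hR hrankQA c f hf xbar xhat ubar uhat hfeas1 hfeas2 hopt1 hopt2
end

section
/- Let Q ∈ ℝ^{n×n} be symmetric positive definite, R ∈ ℝ^{m×m} symmetric positive definite, A ∈ ℝ^{n×n}, B ∈ ℝ^{n×m} such that [Aᵀ; Bᵀ] has full column rank, and let K^y, K^λ ∈ ℝ^{n×n} be symmetric positive definite. Then the matrix S = [[−K^yQ, −K^yAᵀ], [K^λA, −K^λBR⁻¹Bᵀ]] is Hurwitz. -/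
/-!
With `P = diag(K^y⁻¹, K^λ⁻¹)` the matrix `P S = [[-Q, -Aᵀ], [A, -BR⁻¹Bᵀ]]` has skew off-diagonal
part, so `Sᵀ P + P S = -2 diag(Q, BR⁻¹Bᵀ)`. For an eigenpair `S v = z v` this gives
`2 Re z · v* P v = -2 (x* Q x + y* BR⁻¹Bᵀ y)` with `v = (x, y)`, hence `Re z ≤ 0`; if `Re z = 0`
then `x = 0` and `Bᵀ y = 0`, the first block row of `S v = z v` gives `Aᵀ y = 0`, and the rank
condition forces `y = 0`. This is the eigenvector form of the Lyapunov/LaSalle argument.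
-/

open Matrix

namespace Matrix

variable {n m : Type*} [Fintype n]

theorem exists_mulVec_eq_smul_of_mem_spectrum {K : Type*} [Field K] [DecidableEq n]
    {M : Matrix n n K} {z : K} (hz : z ∈ spectrum K M) : ∃ v ≠ 0, M *ᵥ v = z • v := by
  rw [← spectrum_toLin', ← Module.End.hasEigenvalue_iff_mem_spectrum] at hz
  obtain ⟨v, hv⟩ := hz.exists_hasEigenvector
  exact ⟨v, hv.2, by simpa using hv.apply_eq_smul⟩

theorem map_nonsing_inv {K L : Type*} [Field K] [Field L] [DecidableEq n] (f : K →+* L)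
    (M : Matrix n n K) : M⁻¹.map f = (M.map f)⁻¹ := by
  have hadj : M.adjugate.map f = (M.map f).adjugate := f.map_adjugate M
  have hdet : f M.det = (M.map f).det := f.map_det M
  rw [inv_def, inv_def, ← hadj, ← hdet, Ring.inverse_eq_inv', Ring.inverse_eq_inv', ← map_inv₀]
  ext i j
  simp

theorem mulVec_injective_of_rank_eq {K : Type*} [Field K] {M : Matrix m n K}
    (hM : M.rank = Fintype.card n) : Function.Injective M.mulVec := by
  rw [mulVec_injective_iff, linearIndependent_iff_card_eq_finrank_span, ← hM,
    rank_eq_finrank_span_cols]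
  rfl

section Lyapunov

variable {𝕜 : Type*} [RCLike 𝕜]
open scoped ComplexOrder

theorem star_dotProduct_conjTranspose_mul_add_mul_mulVec {S : Matrix n n 𝕜} {v : n → 𝕜}
    {z : 𝕜} (hv : S *ᵥ v = z • v) (P : Matrix n n 𝕜) :
    star v ⬝ᵥ (Sᴴ * P + P * S) *ᵥ v = 2 * RCLike.re z * (star v ⬝ᵥ P *ᵥ v) := by
  rw [add_mulVec, dotProduct_add, ← mulVec_mulVec, ← mulVec_mulVec, hv, mulVec_smul,
    dotProduct_mulVec (star v) Sᴴ, ← star_mulVec, hv, star_smul, smul_dotProduct,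
    dotProduct_smul, smul_eq_mul, smul_eq_mul, ← add_mul, RCLike.star_def, add_comm,
    RCLike.add_conj]

theorem re_lt_zero_of_mem_spectrum_of_lyapunov [DecidableEq n] {S P W : Matrix n n 𝕜}
    (hP : P.PosSemidef) (hW : W.PosSemidef) (hlyap : Sᴴ * P + P * S = -W)
    (hker : ∀ (v : n → 𝕜) (z : 𝕜), S *ᵥ v = z • v → W *ᵥ v = 0 → v = 0) {z : 𝕜}
    (hz : z ∈ spectrum 𝕜 S) : RCLike.re z < 0 := by
  obtain ⟨v, hv0, hv⟩ := exists_mulVec_eq_smul_of_mem_spectrum hz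
  have hform := star_dotProduct_conjTranspose_mul_add_mul_mulVec hv P
  rw [hlyap, neg_mulVec, dotProduct_neg] at hform
  by_contra! hre
  have hWv : star v ⬝ᵥ W *ᵥ v = 0 := by
    refine le_antisymm (neg_nonneg.1 (hform ▸ mul_nonneg ?_ (hP.dotProduct_mulVec_nonneg v)))
      (hW.dotProduct_mulVec_nonneg v)
    exact_mod_cast mul_nonneg zero_le_two hre
  exact hv0 (hker v z hv ((hW.dotProduct_mulVec_zero_iff v).1 hWv))

theorem PosSemidef.fromBlocks_zero [Fintype m] {A : Matrix n n 𝕜} {D : Matrix m m 𝕜}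
    (hA : A.PosSemidef) (hD : D.PosSemidef) : (fromBlocks A 0 0 D).PosSemidef := by
  refine .of_dotProduct_mulVec_nonneg (hA.1.fromBlocks (by simp) hD.1) fun x ↦ ?_
  rw [← Sum.elim_comp_inl_inr x, fromBlocks_mulVec, Function.star_sumElim,
    sumElim_dotProduct_sumElim]
  simpa using add_nonneg (hA.dotProduct_mulVec_nonneg _) (hD.dotProduct_mulVec_nonneg _)

theorem PosDef.conjTranspose_mulVec_eq_zero_of_mul_mul_conjTranspose [Fintype m]
    {R : Matrix m m 𝕜} (hR : R.PosDef) {B : Matrix n m 𝕜} {y : n → 𝕜} (h : (B * R * Bᴴ) *ᵥ y = 0) :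
    Bᴴ *ᵥ y = 0 := by
  by_contra hBy
  have hpos := hR.dotProduct_mulVec_pos hBy
  rw [star_mulVec, conjTranspose_conjTranspose, dotProduct_mulVec, vecMul_vecMul,
    ← dotProduct_mulVec, mulVec_mulVec, h, dotProduct_zero] at hpos
  exact hpos.false

end Lyapunov

section Complexification

theorem re_star_dotProduct_map_ofReal_mulVec (M : Matrix n n ℝ) (v : n → ℂ) :
    (star v ⬝ᵥ M.map Complex.ofReal *ᵥ v).re
      = (fun i ↦ (v i).re) ⬝ᵥ M *ᵥ (fun i ↦ (v i).re)
        + (fun i ↦ (v i).im) ⬝ᵥ M *ᵥ (fun i ↦ (v i).im) := by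
  simp only [dotProduct, mulVec, Complex.re_sum, Finset.mul_sum, ← Finset.sum_add_distrib]
  refine Finset.sum_congr rfl fun i _ ↦ Finset.sum_congr rfl fun j _ ↦ ?_
  simp

open scoped ComplexOrder in
theorem PosDef.map_ofReal {M : Matrix n n ℝ} (hM : M.PosDef) :
    (M.map Complex.ofReal).PosDef := by
  have hH : (M.map Complex.ofReal).IsHermitian := hM.1.map _ fun x ↦ by simp
  refine .of_dotProduct_mulVec_pos hH fun v hv ↦
    Complex.pos_iff.2 ⟨?_, (hH.im_star_dotProduct_mulVec_self v).symm⟩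
  rw [re_star_dotProduct_map_ofReal_mulVec]
  obtain h | h : (fun i ↦ (v i).re) ≠ 0 ∨ (fun i ↦ (v i).im) ≠ 0 := by
    by_contra! h
    exact hv (funext fun i ↦ Complex.ext (congrFun h.1 i) (congrFun h.2 i))
  · exact add_pos_of_pos_of_nonneg (hM.dotProduct_mulVec_pos h)
      (hM.posSemidef.dotProduct_mulVec_nonneg _)
  · exact add_pos_of_nonneg_of_pos (hM.posSemidef.dotProduct_mulVec_nonneg _)
      (hM.dotProduct_mulVec_pos h)

theorem re_map_ofReal_mulVec (M : Matrix m n ℝ) (v : n → ℂ) :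
    (fun i ↦ ((M.map Complex.ofReal *ᵥ v) i).re) = M *ᵥ fun j ↦ (v j).re := by
  ext i
  simp [mulVec, dotProduct, Complex.re_sum]

theorem im_map_ofReal_mulVec (M : Matrix m n ℝ) (v : n → ℂ) :
    (fun i ↦ ((M.map Complex.ofReal *ᵥ v) i).im) = M *ᵥ fun j ↦ (v j).im := by
  ext i
  simp [mulVec, dotProduct, Complex.im_sum]

theorem mulVec_injective_map_ofReal {M : Matrix m n ℝ} (hM : Function.Injective M.mulVec) :
    Function.Injective (M.map Complex.ofReal).mulVec := by
  refine (injective_iff_map_eq_zero (M.map Complex.ofReal).mulVecLin).2 fun v hv ↦ ?_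
  rw [mulVecLin_apply] at hv
  have hre : M *ᵥ (fun j ↦ (v j).re) = M *ᵥ 0 := by
    rw [← re_map_ofReal_mulVec, hv, mulVec_zero]
    rfl
  have him : M *ᵥ (fun j ↦ (v j).im) = M *ᵥ 0 := by
    rw [← im_map_ofReal_mulVec, hv, mulVec_zero]
    rfl
  funext j
  exact Complex.ext (congrFun (hM hre) j) (congrFun (hM him) j)

end Complexification

section PrimalDual

open scoped ComplexOrder

variable [Fintype m] [DecidableEq m]

noncomputable def primalDualMatrix {K : Type*} [Field K] [StarRing K] (A : Matrix n n K)
    (B : Matrix n m K) (Q : Matrix n n K) (R : Matrix m m K) (Ky Klam : Matrix n n K) :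
    Matrix (n ⊕ n) (n ⊕ n) K :=
  fromBlocks (-(Ky * Q)) (-(Ky * Aᴴ)) (Klam * A) (-(Klam * (B * R⁻¹ * Bᴴ)))

theorem primalDualMatrix_map {K L : Type*} [Field K] [StarRing K] [Field L] [StarRing L]
    (f : K →+* L) (hf : ∀ x, f (star x) = star (f x)) (A : Matrix n n K) (B : Matrix n m K)
    (Q : Matrix n n K) (R : Matrix m m K) (Ky Klam : Matrix n n K) :
    (primalDualMatrix A B Q R Ky Klam).map f
      = primalDualMatrix (A.map f) (B.map f) (Q.map f) (R.map f) (Ky.map f) (Klam.map f) := by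
  simp [primalDualMatrix, fromBlocks_map, Matrix.map_neg _ (map_neg f), Matrix.map_mul,
    map_nonsing_inv, ← conjTranspose_map _ hf]

variable {𝕜 : Type*} [RCLike 𝕜] [DecidableEq n] {A : Matrix n n 𝕜} {B : Matrix n m 𝕜}
  {Q : Matrix n n 𝕜} {R : Matrix m m 𝕜} {Ky Klam : Matrix n n 𝕜}

theorem primalDualMatrix_lyapunov (hQ : Q.IsHermitian) (hR : R.IsHermitian)
    (hKy : Ky.IsHermitian) (hKlam : Klam.IsHermitian) (hKy' : IsUnit Ky.det)
    (hKlam' : IsUnit Klam.det) :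
    (primalDualMatrix A B Q R Ky Klam)ᴴ * fromBlocks Ky⁻¹ 0 0 Klam⁻¹
        + fromBlocks Ky⁻¹ 0 0 Klam⁻¹ * primalDualMatrix A B Q R Ky Klam
      = -fromBlocks (2 • Q) 0 0 (2 • (B * R⁻¹ * Bᴴ)) := by
  set P : Matrix (n ⊕ n) (n ⊕ n) 𝕜 := fromBlocks Ky⁻¹ 0 0 Klam⁻¹
  have hP : Pᴴ = P := (hKy.inv.fromBlocks (by simp) hKlam.inv).eq
  have hPS : P * primalDualMatrix A B Q R Ky Klam
      = fromBlocks (-Q) (-Aᴴ) A (-(B * R⁻¹ * Bᴴ)) := by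
    simp [P, primalDualMatrix, fromBlocks_multiply, ← Matrix.mul_assoc, nonsing_inv_mul _ hKy',
      nonsing_inv_mul _ hKlam']
  have hBRB : (B * R⁻¹ * Bᴴ)ᴴ = B * R⁻¹ * Bᴴ := (isHermitian_mul_mul_conjTranspose B hR.inv).eq
  rw [← hP, ← conjTranspose_mul, hP, hPS, fromBlocks_conjTranspose, fromBlocks_add,
    fromBlocks_neg]
  simp [hQ.eq, hBRB, two_smul]

theorem eq_zero_of_primalDualMatrix_mulVec_eq_smul (hQ : Q.PosDef) (hR : R.PosDef)
    (hKy : IsUnit Ky.det) (hAB : Function.Injective (fromRows Aᴴ Bᴴ).mulVec) {v : n ⊕ n → 𝕜}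
    {z : 𝕜} (hv : primalDualMatrix A B Q R Ky Klam *ᵥ v = z • v)
    (hW : fromBlocks (2 • Q) 0 0 (2 • (B * R⁻¹ * Bᴴ)) *ᵥ v = 0) : v = 0 := by
  rw [← Sum.elim_comp_inl_inr v] at hv hW ⊢
  set x := v ∘ Sum.inl
  set y := v ∘ Sum.inr
  rw [fromBlocks_mulVec, ← Sum.elim_zero_zero, Sum.elim_eq_iff] at hW
  simp only [Sum.elim_comp_inl, Sum.elim_comp_inr, zero_mulVec, add_zero, zero_add,
    smul_mulVec, smul_eq_zero, two_ne_zero, false_or] at hW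
  obtain ⟨hQx, hPy⟩ := hW
  have hx : x = 0 := mulVec_injective_iff_isUnit.2 hQ.isUnit (hQx.trans (mulVec_zero Q).symm)
  have hBy : Bᴴ *ᵥ y = 0 := hR.inv.conjTranspose_mulVec_eq_zero_of_mul_mul_conjTranspose hPy
  have hKAy : Ky *ᵥ Aᴴ *ᵥ y = 0 := by
    funext i
    simpa [primalDualMatrix, fromBlocks_mulVec, hx, mulVec_mulVec, neg_mulVec] using
      congrFun hv (.inl i)
  have hAy : Aᴴ *ᵥ y = 0 := eq_zero_of_mulVec_eq_zero hKy.ne_zero hKAy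
  have hy : y = 0 := hAB (by rw [fromRows_mulVec, hAy, hBy, mulVec_zero, Sum.elim_zero_zero])
  rw [hx, hy, Sum.elim_zero_zero]

theorem re_lt_zero_of_mem_spectrum_primalDualMatrix (hQ : Q.PosDef) (hR : R.PosDef)
    (hAB : Function.Injective (fromRows Aᴴ Bᴴ).mulVec) (hKy : Ky.PosDef) (hKlam : Klam.PosDef)
    {z : 𝕜} (hz : z ∈ spectrum 𝕜 (primalDualMatrix A B Q R Ky Klam)) : RCLike.re z < 0 := by
  have hKy' := (isUnit_iff_isUnit_det Ky).1 hKy.isUnit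
  have hKlam' := (isUnit_iff_isUnit_det Klam).1 hKlam.isUnit
  exact re_lt_zero_of_mem_spectrum_of_lyapunov
    (hKy.inv.posSemidef.fromBlocks_zero hKlam.inv.posSemidef)
    ((hQ.posSemidef.smul zero_le_two).fromBlocks_zero
      ((hR.inv.posSemidef.mul_mul_conjTranspose_same B).smul zero_le_two))
    (primalDualMatrix_lyapunov hQ.1 hR.1 hKy.1 hKlam.1 hKy' hKlam')
    (fun v z hv hW ↦ eq_zero_of_primalDualMatrix_mulVec_eq_smul hQ hR hKy' hAB hv hW) hz

end PrimalDual

end Matrix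

/-- The primal-dual state matrix `S = [[-K^yQ, -K^yAᵀ], [K^λA, -K^λBR⁻¹Bᵀ]]`
is Hurwitz when `Q`, `R`, `K^y`, `K^λ` are positive definite and `[Aᵀ; Bᵀ]`
has full column rank. -/
theorem stmt_9 {n m : ℕ}
    (A : Matrix (Fin n) (Fin n) ℝ) (B : Matrix (Fin n) (Fin m) ℝ)
    (Q : Matrix (Fin n) (Fin n) ℝ) (R : Matrix (Fin m) (Fin m) ℝ)
    (hQ : Q.PosDef) (hR : R.PosDef)
    (hrank : (Matrix.fromRows Aᵀ Bᵀ).rank = n)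
    (Ky Klam : Matrix (Fin n) (Fin n) ℝ)
    (hKy : Ky.PosDef) (hKlam : Klam.PosDef)
    (S : Matrix (Fin n ⊕ Fin n) (Fin n ⊕ Fin n) ℝ)
    (hS : S = Matrix.fromBlocks (-(Ky * Q)) (-(Ky * Aᵀ))
                (Klam * A) (-(Klam * (B * R⁻¹ * Bᵀ)))) :
    ∀ z ∈ spectrum ℂ (S.map (Complex.ofReal)), z.re < 0 := by
  have hSc : S.map Complex.ofReal = primalDualMatrix (A.map (↑)) (B.map (↑)) (Q.map (↑))
      (R.map (↑)) (Ky.map (↑)) (Klam.map (↑)) := by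
    rw [hS, ← conjTranspose_eq_transpose_of_trivial A, ← conjTranspose_eq_transpose_of_trivial B]
    exact primalDualMatrix_map Complex.ofRealHom (fun x ↦ (Complex.conj_ofReal x).symm) ..
  have hAB :
      Function.Injective (fromRows (A.map Complex.ofReal)ᴴ (B.map Complex.ofReal)ᴴ).mulVec := by
    convert mulVec_injective_map_ofReal
      (mulVec_injective_of_rank_eq (hrank.trans (Fintype.card_fin n).symm)) using 2
    ext (i | i) j <;> simp
  intro z hz
  rw [hSc] at hz
  exact re_lt_zero_of_mem_spectrum_primalDualMatrix hQ.map_ofReal hR.map_ofReal hAB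
    hKy.map_ofReal hKlam.map_ofReal hz
end
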